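/- Let c be an admissible coefficient function satisfying (Cubic values). Let i_1 ≠ i_2 and let γ = e_{i_1,j_1}+e_{i_1,j_1′}+e_{i_2,j_2}+e_{i_2,j_2′} ∈ ℤ^{μ_A−2}. If a_{i_1} ≥ 3 and j_1′ ≥ 2, then c(γ,0) = 0. -/

import Mathlib

/- Common framework: Frobenius manifolds for orbifold projective lines ℙ¹_A,
   following Ishibashi–Shiraishi–Takahashi. -/

namespace FrobeniusUniqueness

/-- A point index `(i, j)` labelling a flat coordinate `t_{i,j}`. -/
abbrev Pt : Type := Fin 3 × ℕ

/-- A non-negative element of `ℤ^{μ_A − 2}`: an exponent vector `α` with `α_{i,j} ∈ ℕ`. -/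
abbrev Expv : Type := Pt →₀ ℕ

/-- The standard basis vector `e_{i,j}`. -/
noncomputable def e (i : Fin 3) (j : ℕ) : Expv := Finsupp.single (i, j) 1

/-- The length `|α|` of an exponent vector. -/
def len (α : Expv) : ℕ := α.sum fun _ n => n

/-- A point index `(i,j)` is valid if `1 ≤ j ≤ a_i − 1`. -/
def ValidPt (A : Fin 3 → ℕ) (p : Pt) : Prop := 1 ≤ p.2 ∧ p.2 ≤ A p.1 - 1

/-- An exponent vector lies in `ℤ^{μ_A − 2}` iff it is supported on valid indices. -/
def Valid (A : Fin 3 → ℕ) (α : Expv) : Prop := ∀ p ∈ α.support, ValidPt A p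

/-- The combinatorial factor `s_{a,b,c}`. -/
def sFactor (a b c : ℕ) : ℂ :=
  if a = b ∧ b = c then 6
  else if a ≠ b ∧ b ≠ c ∧ a ≠ c then 1
  else 2

/-- The index type for the flat coordinates `t_1`, `t_{i,j}`, `t_{μ_A}`. -/
inductive Idx : Type where
  | one : Idx
  | pt : Fin 3 → ℕ → Idx
  | mu : Idx
deriving DecidableEq

/-- Validity of a flat coordinate index. -/
def ValidIdx (A : Fin 3 → ℕ) : Idx → Prop
  | .one => True
  | .pt i j => ValidPt A (i, j)
  | .mu => True

/-- The metric `η` in the frame `∂_1, ∂_{i,j}, ∂_{μ_A}`. -/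
noncomputable def eta (A : Fin 3 → ℕ) : Idx → Idx → ℂ
  | .one, .mu => 1
  | .mu, .one => 1
  | .pt i j, .pt i' j' =>
      if i = i' ∧ j + j' = A i ∧ 1 ≤ j ∧ j ≤ A i - 1 then (A i : ℂ)⁻¹ else 0
  | _, _ => 0

/-- The point indices occurring in an `Idx`. -/
def ptsOf : Idx → List Pt
  | .pt i j => [(i, j)]
  | _ => []

/-- The number of occurrences of `μ_A` in an `Idx`. -/
def muCount : Idx → ℕ
  | .mu => 1
  | _ => 0

/-- The factor produced when the monomial `t^{β + Σ_{p ∈ ps} e_p}` is differentiated by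
`∏_{p ∈ ps} ∂_p`, leaving the monomial `t^β`. -/
noncomputable def dfac (β : Expv) : List Pt → ℕ
  | [] => 1
  | p :: ps =>
      ((β + ((ps.map fun q => (Finsupp.single q 1 : Expv)).sum) + Finsupp.single p 1 : Expv) p)
        * dfac β ps

/-- `der A c a b d β m` is the coefficient of `t^β · e^{m·t_{μ_A}}` in `∂_a ∂_b ∂_d F`, where
`F = (1/2)t_1²t_{μ_A} + (1/2)t_1·Σ_{i,j}(1/a_i)t_{i,j}t_{i,a_i−j} + Σ_{α,m} c(α,m)t^α e^{m t_{μ_A}}`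
is the potential of the coefficient function `c`.  In particular `∂_1∂_a∂_b F = η(∂_a,∂_b)`. -/
noncomputable def der (A : Fin 3 → ℕ) (c : Expv → ℕ → ℂ) (a b d : Idx) (β : Expv) (m : ℕ) : ℂ :=
  if a = .one then (if β = 0 ∧ m = 0 then eta A b d else 0)
  else if b = .one then (if β = 0 ∧ m = 0 then eta A a d else 0)
  else if d = .one then (if β = 0 ∧ m = 0 then eta A a b else 0)
  else
    (m : ℂ) ^ (muCount a + muCount b + muCount d) *
      (dfac β (ptsOf a ++ ptsOf b ++ ptsOf d) : ℂ) *
      c (β + (((ptsOf a ++ ptsOf b ++ ptsOf d).map fun q => (Finsupp.single q 1 : Expv)).sum)) m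

/-- The coefficient of `t^β · e^{m·t_{μ_A}}` in
`Σ_{σ,τ} ∂_a∂_b∂_σF · η^{στ} · ∂_τ∂_d∂_e F`, where `(η^{στ})` is the inverse matrix of
`(η_{στ})` (so the only nonzero entries are `η^{1,μ_A} = η^{μ_A,1} = 1` and
`η^{(i,j),(i,a_i−j)} = a_i`). -/
noncomputable def quadTerm (A : Fin 3 → ℕ) (c : Expv → ℕ → ℂ) (a b d e' : Idx)
    (β : Expv) (m : ℕ) : ℂ :=
  ∑ x ∈ Finset.HasAntidiagonal.antidiagonal β, ∑ y ∈ Finset.HasAntidiagonal.antidiagonal m,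
    (der A c a b .one x.1 y.1 * der A c .mu d e' x.2 y.2
     + der A c a b .mu x.1 y.1 * der A c .one d e' x.2 y.2
     + ∑ i : Fin 3, ∑ j ∈ Finset.Icc 1 (A i - 1),
         (A i : ℂ) * der A c a b (.pt i j) x.1 y.1 * der A c (.pt i (A i - j)) d e' x.2 y.2)

/-- `χ_A = 1/a_1 + 1/a_2 + 1/a_3 − 1`. -/
noncomputable def chi (A : Fin 3 → ℕ) : ℚ := (A 0 : ℚ)⁻¹ + (A 1 : ℚ)⁻¹ + (A 2 : ℚ)⁻¹ - 1

/-- The degree of the monomial `t^α`: `Σ_{i,j} α_{i,j}·(a_i − j)/a_i`. -/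
noncomputable def deg (A : Fin 3 → ℕ) (α : Expv) : ℚ :=
  α.sum fun p n => (n : ℚ) * (((A p.1 : ℚ) - (p.2 : ℚ)) / (A p.1 : ℚ))

/-- A coefficient function is admissible if it satisfies (Homogeneity) and the WDVV
equations (coefficientwise, in the variables `t_{i,j}` and `e^{t_{μ_A}}`). -/
structure IsAdmissible (A : Fin 3 → ℕ) (c : Expv → ℕ → ℂ) : Prop where
  homog : ∀ α : Expv, Valid A α → ∀ m : ℕ, c α m ≠ 0 → deg A α + (m : ℚ) * chi A = 2
  wdvv : ∀ a b d e' : Idx, ValidIdx A a → ValidIdx A b → ValidIdx A d → ValidIdx A e' →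
      ∀ β : Expv, Valid A β → ∀ m : ℕ,
        quadTerm A c a b d e' β m = quadTerm A c a d b e' β m

/-- (Cubic values). -/
def CubicValues (A : Fin 3 → ℕ) (c : Expv → ℕ → ℂ) : Prop :=
  (∀ (i₁ i₂ i₃ : Fin 3) (j₁ j₂ j₃ : ℕ),
      ValidPt A (i₁, j₁) → ValidPt A (i₂, j₂) → ValidPt A (i₃, j₃) →
      ¬(i₁ = i₂ ∧ i₂ = i₃) → c (e i₁ j₁ + e i₂ j₂ + e i₃ j₃) 0 = 0) ∧
  (∀ (i : Fin 3) (j₁ j₂ j₃ : ℕ),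
      ValidPt A (i, j₁) → ValidPt A (i, j₂) → ValidPt A (i, j₃) →
      sFactor j₁ j₂ j₃ * c (e i j₁ + e i j₂ + e i j₃) 0 =
        if j₁ + j₂ + j₃ = A i then (A i : ℂ)⁻¹ else 0)

/-- (Normalization). -/
def Normalization (A : Fin 3 → ℕ) (c : Expv → ℕ → ℂ) : Prop :=
  (2 ≤ A 0 → c (e 0 1 + e 1 1 + e 2 1) 1 = 1) ∧
  (A 0 = 1 → A 0 < A 1 → c (e 1 1 + e 2 1) 1 = 1) ∧
  (A 0 = 1 → A 1 = 1 → A 1 < A 2 → c (e 2 1) 1 = 1) ∧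
  (A 0 = 1 → A 1 = 1 → A 2 = 1 → c 0 1 = 1)

/-- (Separation). -/
def Separation (A : Fin 3 → ℕ) (c : Expv → ℕ → ℂ) : Prop :=
  ∀ γ : Expv, Valid A γ →
    ∀ (i₁ i₂ : Fin 3) (j₁ j₂ : ℕ), i₁ ≠ i₂ → ValidPt A (i₁, j₁) → ValidPt A (i₂, j₂) →
      e i₁ j₁ + e i₂ j₂ ≤ γ → c γ 0 = 0

/-- The automorphism of `ℤ^{μ_A−2}` exchanging `e_{i₁,j}` and `e_{i₂,j}` for all `j`. -/
def swapExp (i₁ i₂ : Fin 3) (α : Expv) : Expv :=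
  Finsupp.equivMapDomain ((Equiv.swap i₁ i₂).prodCongr (Equiv.refl ℕ)) α

/-- (Symmetry). -/
def Symmetry (A : Fin 3 → ℕ) (c : Expv → ℕ → ℂ) : Prop :=
  ∀ i₁ i₂ : Fin 3, A i₁ = A i₂ → ∀ α : Expv, Valid A α → ∀ m : ℕ,
    c (swapExp i₁ i₂ α) m = c α m


/-
By (Cubic values) the only nonzero cubic coefficients are `c(e_{i,p} + e_{i,q} + e_{i,s}, 0)`
with `p + q + s = a_i`. Apply WDVV at `m = 0` to four derivatives `∂_a, ∂_b, ∂_d, ∂_{e'}` and to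
the linear monomial `t_r`: each product of two third derivatives is a cubic coefficient times a
quartic one, and a suitable choice kills all of them except one multiple of `c(γ, 0)`.
* If `j₂ + j₂' ≥ a_{i₂}`, take `∂_{i₁,1}, ∂_{i₁,j₁'-1}, ∂_{i₂,j₂}, ∂_{i₂,j₂'}` and `r = (i₁, j₁)`.
* If `j₁ + j₁' > a_{i₁}`, take `∂_{i₁,a-j₁'}, ∂_{i₁,j₁+j₁'-a}, ∂_{i₁,j₁'}, ∂_{i₂,j₂'}` and
  `r = (i₂, j₂)`, where `a = a_{i₁}`.
* Otherwise `t^γ` has degree `4 - (j₁+j₁')/a_{i₁} - (j₂+j₂')/a_{i₂} > 2`, so (Homogeneity)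
  forces `c(γ, 0) = 0`.
-/

lemma sFactor_ne_zero (a b d : ℕ) : sFactor a b d ≠ 0 := by
  unfold sFactor; split_ifs <;> norm_num

lemma dfac_pos (β : Expv) (l : List Pt) : 0 < dfac β l := by
  induction l with
  | nil => simp [dfac]
  | cons p ps ih => exact Nat.mul_pos (by simp) ih

lemma ValidPt.of_le {A : Fin 3 → ℕ} {i : Fin 3} {j : ℕ} (h₁ : 1 ≤ j) (h₂ : j ≤ A i - 1) :
    ValidPt A (i, j) :=
  ⟨h₁, h₂⟩

lemma ValidPt.dual {A : Fin 3 → ℕ} {i : Fin 3} {j : ℕ} (h : ValidPt A (i, j)) :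
    ValidPt A (i, A i - j) := by
  have h₁ : 1 ≤ j := h.1
  have h₂ : j ≤ A i - 1 := h.2
  exact .of_le (by omega) (by omega)

lemma Valid.add {A : Fin 3 → ℕ} {α β : Expv} (hα : Valid A α) (hβ : Valid A β) :
    Valid A (α + β) := fun p hp => by
  rcases Finset.mem_union.mp (Finsupp.support_add hp) with h | h
  exacts [hα p h, hβ p h]

lemma valid_single {A : Fin 3 → ℕ} {p : Pt} (hp : ValidPt A p) :
    Valid A (Finsupp.single p 1) := fun q hq => by
  obtain rfl : q = p := by simpa using hq
  exact hp

lemma sum_antidiagonal_single {M : Type*} [AddCommMonoid M] (r : Pt) (f : Expv × Expv → M) :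
    ∑ x ∈ Finset.HasAntidiagonal.antidiagonal (Finsupp.single r 1 : Expv), f x =
      f (0, Finsupp.single r 1) + f (Finsupp.single r 1, 0) := by
  rw [Finsupp.antidiagonal_single, Finset.sum_map, Finset.Nat.sum_antidiagonal_succ]
  simp

lemma sum_pairing_eq_zero {A : Fin 3 → ℕ} (f g : Fin 3 → ℕ → ℂ)
    (h : ∀ i j, ValidPt A (i, j) → f i j * g i j = 0) :
    ∑ i : Fin 3, ∑ j ∈ Finset.Icc 1 (A i - 1), (A i : ℂ) * f i j * g i j = 0 :=
  Finset.sum_eq_zero fun i _ => Finset.sum_eq_zero fun j hj => by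
    rw [mul_assoc, h i j (Finset.mem_Icc.mp hj), mul_zero]

section Coefficients

variable {A : Fin 3 → ℕ} {c : Expv → ℕ → ℂ}

lemma der_pt_eq_zero_iff (p q s : Pt) (β : Expv) :
    der A c (.pt p.1 p.2) (.pt q.1 q.2) (.pt s.1 s.2) β 0 = 0 ↔
      c (β + Finsupp.single p 1 + Finsupp.single q 1 + Finsupp.single s 1) 0 = 0 := by
  simp [der, ptsOf, muCount, add_assoc, (dfac_pos _ _).ne']

lemma quadTerm_pt (a b d e' : Pt) (β : Expv) :
    quadTerm A c (.pt a.1 a.2) (.pt b.1 b.2) (.pt d.1 d.2) (.pt e'.1 e'.2) β 0 =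
      ∑ x ∈ Finset.HasAntidiagonal.antidiagonal β, ∑ i : Fin 3, ∑ j ∈ Finset.Icc 1 (A i - 1),
        (A i : ℂ) * der A c (.pt a.1 a.2) (.pt b.1 b.2) (.pt i j) x.1 0 *
          der A c (.pt i (A i - j)) (.pt d.1 d.2) (.pt e'.1 e'.2) x.2 0 := by
  simp [quadTerm, der, muCount]

lemma cubic_eq_zero (hcub : CubicValues A c) {p q s : Pt}
    (hp : ValidPt A p) (hq : ValidPt A q) (hs : ValidPt A s)
    (h : ¬(p.1 = q.1 ∧ q.1 = s.1 ∧ p.2 + q.2 + s.2 = A p.1)) :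
    c (Finsupp.single p 1 + Finsupp.single q 1 + Finsupp.single s 1) 0 = 0 := by
  obtain ⟨i₁, j₁⟩ := p
  obtain ⟨i₂, j₂⟩ := q
  obtain ⟨i₃, j₃⟩ := s
  by_cases hrow : i₁ = i₂ ∧ i₂ = i₃
  · obtain ⟨rfl, rfl⟩ := hrow
    have hval := hcub.2 i₁ j₁ j₂ j₃ hp hq hs
    rw [if_neg (by simpa using h)] at hval
    exact (mul_eq_zero.mp hval).resolve_left (sFactor_ne_zero _ _ _)
  · exact hcub.1 i₁ i₂ i₃ j₁ j₂ j₃ hp hq hs hrow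

lemma cubic_ne_zero (hcub : CubicValues A c) {i : Fin 3} {j₁ j₂ j₃ : ℕ}
    (h₁ : ValidPt A (i, j₁)) (h₂ : ValidPt A (i, j₂)) (h₃ : ValidPt A (i, j₃))
    (h : j₁ + j₂ + j₃ = A i) :
    c (Finsupp.single (i, j₁) 1 + Finsupp.single (i, j₂) 1 + Finsupp.single (i, j₃) 1) 0 ≠ 0 := by
  intro h0
  have hval := hcub.2 i j₁ j₂ j₃ h₁ h₂ h₃
  rw [if_pos h] at hval
  have hA : (A i : ℂ) ≠ 0 := Nat.cast_ne_zero.mpr (by have := h₁.1; have := h₁.2; omega)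
  change c (e i j₁ + e i j₂ + e i j₃) 0 = 0 at h0
  rw [h0, mul_zero] at hval
  exact inv_ne_zero hA hval.symm

/-- WDVV for `∂_a, ∂_b, ∂_d, ∂_{e'}` at the coefficient of `t_r`: the hypotheses kill every
product of third derivatives except `c(a + b + k) · c(r + k^∨ + d + e')`, where `k^∨` is the
point dual to `k` under `η`. -/
theorem coeff_eq_zero_of_wdvv (hadm : IsAdmissible A c) {a b d e' k r : Pt}
    (ha : ValidPt A a) (hb : ValidPt A b) (hd : ValidPt A d) (he : ValidPt A e')
    (hk : ValidPt A k) (hr : ValidPt A r)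
    (hab : ∀ p, ValidPt A p → p ≠ k →
      c (Finsupp.single a 1 + Finsupp.single b 1 + Finsupp.single p 1) 0 = 0)
    (habk : c (Finsupp.single a 1 + Finsupp.single b 1 + Finsupp.single k 1) 0 ≠ 0)
    (hde : ∀ p, ValidPt A p →
      c (Finsupp.single p 1 + Finsupp.single d 1 + Finsupp.single e' 1) 0 = 0)
    (had : ∀ p, ValidPt A p →
      c (Finsupp.single a 1 + Finsupp.single d 1 + Finsupp.single p 1) 0 = 0)
    (hbe : ∀ p, ValidPt A p →
      c (Finsupp.single p 1 + Finsupp.single b 1 + Finsupp.single e' 1) 0 = 0) :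
    c (Finsupp.single r 1 + Finsupp.single (k.1, A k.1 - k.2) 1 + Finsupp.single d 1 +
      Finsupp.single e' 1) 0 = 0 := by
  have hw := hadm.wdvv (.pt a.1 a.2) (.pt b.1 b.2) (.pt d.1 d.2) (.pt e'.1 e'.2) ha hb hd he
    (Finsupp.single r 1) (valid_single hr) 0
  rw [quadTerm_pt, quadTerm_pt, sum_antidiagonal_single, sum_antidiagonal_single] at hw
  dsimp only at hw
  have hL₂ : ∀ i j, ValidPt A (i, j) →
      der A c (.pt a.1 a.2) (.pt b.1 b.2) (.pt i j) (Finsupp.single r 1) 0 *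
        der A c (.pt i (A i - j)) (.pt d.1 d.2) (.pt e'.1 e'.2) 0 0 = 0 := fun i j hij => by
    rw [(der_pt_eq_zero_iff (i, A i - j) d e' 0).mpr (by rw [zero_add]; exact hde _ hij.dual),
      mul_zero]
  have hR₁ : ∀ i j, ValidPt A (i, j) →
      der A c (.pt a.1 a.2) (.pt d.1 d.2) (.pt i j) 0 0 *
        der A c (.pt i (A i - j)) (.pt b.1 b.2) (.pt e'.1 e'.2) (Finsupp.single r 1) 0 = 0 :=
    fun i j hij => by
      rw [(der_pt_eq_zero_iff a d (i, j) 0).mpr (by rw [zero_add]; exact had _ hij), zero_mul]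
  have hR₂ : ∀ i j, ValidPt A (i, j) →
      der A c (.pt a.1 a.2) (.pt d.1 d.2) (.pt i j) (Finsupp.single r 1) 0 *
        der A c (.pt i (A i - j)) (.pt b.1 b.2) (.pt e'.1 e'.2) 0 0 = 0 := fun i j hij => by
    rw [(der_pt_eq_zero_iff (i, A i - j) b e' 0).mpr (by rw [zero_add]; exact hbe _ hij.dual),
      mul_zero]
  rw [sum_pairing_eq_zero _ _ hL₂, sum_pairing_eq_zero _ _ hR₁, sum_pairing_eq_zero _ _ hR₂,
    add_zero, add_zero] at hw
  have hoff : ∀ i j, ValidPt A (i, j) → (i, j) ≠ k →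
      der A c (.pt a.1 a.2) (.pt b.1 b.2) (.pt i j) 0 0 = 0 := fun i j hij hne =>
    (der_pt_eq_zero_iff a b (i, j) 0).mpr (by rw [zero_add]; exact hab _ hij hne)
  rw [Finset.sum_eq_single k.1, Finset.sum_eq_single_of_mem k.2 (Finset.mem_Icc.mpr hk)] at hw
  · have hAk : (A k.1 : ℂ) ≠ 0 := Nat.cast_ne_zero.mpr (by have := hk.1; have := hk.2; omega)
    have hcubic : der A c (.pt a.1 a.2) (.pt b.1 b.2) (.pt k.1 k.2) 0 0 ≠ 0 := by
      rwa [Ne, der_pt_eq_zero_iff a b k, zero_add]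
    exact (der_pt_eq_zero_iff (k.1, A k.1 - k.2) d e' (Finsupp.single r 1)).mp
      ((mul_eq_zero.mp hw).resolve_left (mul_ne_zero hAk hcubic))
  · intro j hj hjk
    rw [hoff _ _ (Finset.mem_Icc.mp hj) (fun h => hjk (congrArg Prod.snd h)), mul_zero,
      zero_mul]
  · intro i _ hik
    exact Finset.sum_eq_zero fun j hj => by
      rw [hoff _ _ (Finset.mem_Icc.mp hj) (fun h => hik (congrArg Prod.fst h)), mul_zero,
        zero_mul]
  · simp

variable {i₁ i₂ : Fin 3} {j₁ j₁' j₂ j₂' : ℕ}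

lemma coeff_eq_zero_of_le_add_of_two_le (hadm : IsAdmissible A c) (hcub : CubicValues A c)
    (hne : i₁ ≠ i₂) (hv₁ : ValidPt A (i₁, j₁)) (hv₁' : ValidPt A (i₁, j₁'))
    (hv₂ : ValidPt A (i₂, j₂)) (hv₂' : ValidPt A (i₂, j₂'))
    (hj₁' : 2 ≤ j₁') (hsum : A i₂ ≤ j₂ + j₂') :
    c (e i₁ j₁ + e i₁ j₁' + e i₂ j₂ + e i₂ j₂') 0 = 0 := by
  have h₁' : j₁' ≤ A i₁ - 1 := hv₁'.2
  have ha : ValidPt A (i₁, 1) := .of_le le_rfl (by omega)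
  have hb : ValidPt A (i₁, j₁' - 1) := .of_le (by omega) (by omega)
  have hk : ValidPt A (i₁, A i₁ - j₁') := .of_le (by omega) (by omega)
  have h := coeff_eq_zero_of_wdvv hadm ha hb hv₂ hv₂' hk hv₁
    (fun p hp hpk => cubic_eq_zero hcub ha hb hp fun ⟨_, hi, hj⟩ =>
      hpk (Prod.ext hi.symm (by dsimp only at *; omega)))
    (cubic_ne_zero hcub ha hb hk (by omega))
    (fun p hp => cubic_eq_zero hcub hp hv₂ hv₂' fun ⟨hi, _, hj⟩ => by
      obtain ⟨hp₁, -⟩ := hp; dsimp only at *; subst hi; omega)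
    (fun p hp => cubic_eq_zero hcub ha hv₂ hp fun ⟨hi, _⟩ => hne hi)
    (fun p hp => cubic_eq_zero hcub hp hb hv₂' fun ⟨_, hi, _⟩ => hne hi)
  dsimp only at h
  rwa [Nat.sub_sub_self (by omega)] at h

lemma coeff_eq_zero_of_lt_add (hadm : IsAdmissible A c) (hcub : CubicValues A c)
    (hne : i₁ ≠ i₂) (hv₁ : ValidPt A (i₁, j₁)) (hv₁' : ValidPt A (i₁, j₁'))
    (hv₂ : ValidPt A (i₂, j₂)) (hv₂' : ValidPt A (i₂, j₂')) (hsum : A i₁ < j₁ + j₁') :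
    c (e i₁ j₁ + e i₁ j₁' + e i₂ j₂ + e i₂ j₂') 0 = 0 := by
  have h₁ : j₁ ≤ A i₁ - 1 := hv₁.2
  have h₁' : j₁' ≤ A i₁ - 1 := hv₁'.2
  have ha : ValidPt A (i₁, A i₁ - j₁') := .of_le (by omega) (by omega)
  have hb : ValidPt A (i₁, j₁ + j₁' - A i₁) := .of_le (by omega) (by omega)
  have hk : ValidPt A (i₁, A i₁ - j₁) := .of_le (by omega) (by omega)
  have h := coeff_eq_zero_of_wdvv hadm ha hb hv₁' hv₂' hk hv₂
    (fun p hp hpk => cubic_eq_zero hcub ha hb hp fun ⟨_, hi, hj⟩ =>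
      hpk (Prod.ext hi.symm (by dsimp only at *; omega)))
    (cubic_ne_zero hcub ha hb hk (by omega))
    (fun p hp => cubic_eq_zero hcub hp hv₁' hv₂' fun ⟨_, hi, _⟩ => hne hi)
    (fun p hp => cubic_eq_zero hcub ha hv₁' hp fun ⟨_, _, hj⟩ => by
      obtain ⟨hp₁, -⟩ := hp; dsimp only at *; omega)
    (fun p hp => cubic_eq_zero hcub hp hb hv₂' fun ⟨_, hi, _⟩ => hne hi)
  dsimp only at h
  rw [Nat.sub_sub_self (by omega)] at h
  convert h using 2
  unfold e
  abel

lemma deg_add (α β : Expv) : deg A (α + β) = deg A α + deg A β :=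
  Finsupp.sum_add_index' (fun _ => by simp) (fun _ _ _ => by push_cast; ring)

lemma deg_e (i : Fin 3) (j : ℕ) : deg A (e i j) = ((A i : ℚ) - j) / A i := by
  simp [deg, e]

lemma deg_e_add_e {i : Fin 3} (hA : A i ≠ 0) (j j' : ℕ) :
    deg A (e i j + e i j') = 2 - ((j : ℚ) + j') / A i := by
  rw [deg_add, deg_e, deg_e]
  field_simp
  ring

lemma coeff_eq_zero_of_two_lt_deg (hadm : IsAdmissible A c) {α : Expv} (hα : Valid A α)
    (h : 2 < deg A α) : c α 0 = 0 := by
  by_contra h0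
  have hhom := hadm.homog α hα 0 h0
  rw [Nat.cast_zero, zero_mul, add_zero] at hhom
  exact h.ne' hhom

lemma coeff_eq_zero_of_add_le_of_add_lt (hadm : IsAdmissible A c)
    (hv₁ : ValidPt A (i₁, j₁)) (hv₁' : ValidPt A (i₁, j₁'))
    (hv₂ : ValidPt A (i₂, j₂)) (hv₂' : ValidPt A (i₂, j₂'))
    (hsum₁ : j₁ + j₁' ≤ A i₁) (hsum₂ : j₂ + j₂' < A i₂) :
    c (e i₁ j₁ + e i₁ j₁' + e i₂ j₂ + e i₂ j₂') 0 = 0 := by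
  have hA₁ : 0 < A i₁ := by have := hv₁.1; omega
  have hA₂ : 0 < A i₂ := by omega
  refine coeff_eq_zero_of_two_lt_deg hadm
    ((((valid_single hv₁).add (valid_single hv₁')).add (valid_single hv₂)).add
      (valid_single hv₂')) ?_
  rw [add_assoc (e i₁ j₁ + e i₁ j₁'), deg_add, deg_e_add_e hA₁.ne', deg_e_add_e hA₂.ne']
  have h₁ : ((j₁ : ℚ) + j₁') / A i₁ ≤ 1 :=
    (div_le_one (by exact_mod_cast hA₁)).mpr (by exact_mod_cast hsum₁)
  have h₂ : ((j₂ : ℚ) + j₂') / A i₂ < 1 :=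
    (div_lt_one (by exact_mod_cast hA₂)).mpr (by exact_mod_cast hsum₂)
  linarith

end Coefficients

theorem step1_ii_general (A : Fin 3 → ℕ)
    (c : Expv → ℕ → ℂ) (hadm : IsAdmissible A c) (hcub : CubicValues A c)
    (i₁ i₂ : Fin 3) (hne : i₁ ≠ i₂) (j₁ j₁' j₂ j₂' : ℕ)
    (hv₁ : ValidPt A (i₁, j₁)) (hv₁' : ValidPt A (i₁, j₁'))
    (hv₂ : ValidPt A (i₂, j₂)) (hv₂' : ValidPt A (i₂, j₂'))
    (hj₁' : 2 ≤ j₁') :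
    c (e i₁ j₁ + e i₁ j₁' + e i₂ j₂ + e i₂ j₂') 0 = 0 := by
  rcases le_or_gt (A i₂) (j₂ + j₂') with h₂ | h₂
  · exact coeff_eq_zero_of_le_add_of_two_le hadm hcub hne hv₁ hv₁' hv₂ hv₂' hj₁' h₂
  rcases lt_or_ge (A i₁) (j₁ + j₁') with h₁ | h₁
  · exact coeff_eq_zero_of_lt_add hadm hcub hne hv₁ hv₁' hv₂ hv₂' h₁
  · exact coeff_eq_zero_of_add_le_of_add_lt hadm hv₁ hv₁' hv₂ hv₂' h₁ h₂

/-- Sub-Lemma (Step 1-(ii)). -/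
theorem step1_ii (A : Fin 3 → ℕ) (hA : ∀ i, 1 ≤ A i) (hA01 : A 0 ≤ A 1) (hA12 : A 1 ≤ A 2)
    (c : Expv → ℕ → ℂ) (hadm : IsAdmissible A c) (hcub : CubicValues A c)
    (i₁ i₂ : Fin 3) (hne : i₁ ≠ i₂) (j₁ j₁' j₂ j₂' : ℕ)
    (hv₁ : ValidPt A (i₁, j₁)) (hv₁' : ValidPt A (i₁, j₁'))
    (hv₂ : ValidPt A (i₂, j₂)) (hv₂' : ValidPt A (i₂, j₂'))
    (ha : 3 ≤ A i₁) (hj₁' : 2 ≤ j₁') :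
    c (e i₁ j₁ + e i₁ j₁' + e i₂ j₂ + e i₂ j₂') 0 = 0 :=
  step1_ii_general A c hadm hcub i₁ i₂ hne j₁ j₁' j₂ j₂' hv₁ hv₁' hv₂ hv₂' hj₁'

end FrobeniusUniqueness
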